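/- arXiv:2605.00388 — 4 statements merged into one kernel-verified Lean document; each statement's English description precedes it below -/
import Mathlib

section
/- Let L ⊆ ℝ^N be a nonempty closed set with 0 ∈ L and let v ∈ ℝ^N. The following are equivalent: (a) ⟨v, d⟩ ≥ 0 for every d ∈ L; (b) d = 0 is an optimal solution of the problem of minimizing ⟨v, d⟩ over d ∈ L; (c) for every scalar α ≥ ‖v‖ and every d ∈ ℝ^N, one has ⟨v, d⟩ + α · dist(d, L) ≥ 0, where dist(d, L) = inf_{d' ∈ L} ‖d − d'‖. -/
open scoped RealInnerProductSpace

open Metric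

/-!
A functional `⟪v, ·⟫` that is nonnegative on `L` loses at most `‖v‖ * ‖d - d'‖` when moving
from `d' ∈ L` to `d`, by Cauchy–Schwarz; taking the infimum over `d'` gives the penalty form (c).
-/

theorem inner_add_mul_infDist_nonneg {E : Type*} [SeminormedAddCommGroup E]
    [InnerProductSpace ℝ E] {L : Set E} (hL : L.Nonempty) {v : E} (hv : ∀ d ∈ L, 0 ≤ ⟪v, d⟫)
    {α : ℝ} (hα : ‖v‖ ≤ α) (d : E) : 0 ≤ ⟪v, d⟫ + α * infDist d L := by
  have : Nonempty L := hL.to_subtype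
  have hα₀ : 0 ≤ α := (norm_nonneg v).trans hα
  suffices -⟪v, d⟫ ≤ ⨅ d' : L, α * dist d d' by
    rw [infDist_eq_iInf, Real.mul_iInf_of_nonneg hα₀]
    linarith
  refine le_ciInf fun ⟨d', hd'⟩ => ?_
  have hsplit : ⟪v, d⟫ = ⟪v, d'⟫ + ⟪v, d - d'⟫ := by rw [inner_sub_right]; ring
  have hcs : -⟪v, d - d'⟫ ≤ α * dist d d' :=
    calc -⟪v, d - d'⟫ ≤ ‖v‖ * ‖d - d'‖ := (neg_le_abs _).trans (abs_real_inner_le_norm v _)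
      _ ≤ α * dist d d' := by rw [dist_eq_norm]; gcongr
  linarith [hv d' hd']

theorem stmt_1_general {N : ℕ} (L : Set (EuclideanSpace ℝ (Fin N)))
    (h0 : (0 : EuclideanSpace ℝ (Fin N)) ∈ L)
    (v : EuclideanSpace ℝ (Fin N)) :
    ((∀ d ∈ L, 0 ≤ ⟪v, d⟫) ↔
      (∀ d ∈ L, ⟪v, (0 : EuclideanSpace ℝ (Fin N))⟫ ≤ ⟪v, d⟫)) ∧
    ((∀ d ∈ L, 0 ≤ ⟪v, d⟫) ↔
      (∀ α : ℝ, ‖v‖ ≤ α → ∀ d : EuclideanSpace ℝ (Fin N),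
        0 ≤ ⟪v, d⟫ + α * Metric.infDist d L)) := by
  refine ⟨by simp only [inner_zero_right], fun ha α hα d => ?_, fun hc d hd => ?_⟩
  · exact inner_add_mul_infDist_nonneg ⟨0, h0⟩ ha hα d
  · simpa [infDist_zero_of_mem hd] using hc ‖v‖ le_rfl d

/-- Equivalence of the primal characterizations of stationarity (Corollary 3.3.1),
abstracted to an arbitrary nonempty closed set `L` containing `0`:
(a) `⟨v, d⟩ ≥ 0` for all `d ∈ L`;
(b) `d = 0` is an optimal solution of minimizing `⟨v, d⟩` over `L`;
(c) for every `α ≥ ‖v‖` and every `d`, `⟨v, d⟩ + α * dist(d, L) ≥ 0`. -/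
theorem stmt_1 {N : ℕ} (L : Set (EuclideanSpace ℝ (Fin N)))
    (hne : L.Nonempty) (hcl : IsClosed L) (h0 : (0 : EuclideanSpace ℝ (Fin N)) ∈ L)
    (v : EuclideanSpace ℝ (Fin N)) :
    ((∀ d ∈ L, 0 ≤ ⟪v, d⟫) ↔
      (∀ d ∈ L, ⟪v, (0 : EuclideanSpace ℝ (Fin N))⟫ ≤ ⟪v, d⟫)) ∧
    ((∀ d ∈ L, 0 ≤ ⟪v, d⟫) ↔
      (∀ α : ℝ, ‖v‖ ≤ α → ∀ d : EuclideanSpace ℝ (Fin N),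
        0 ≤ ⟪v, d⟫ + α * Metric.infDist d L)) :=
  stmt_1_general L h0 v
end

section
/- (Lemma 3.2.1.) Assume the MPEC setup with F continuously differentiable and g twice continuously differentiable, and let z̄ = (x̄, ȳ) ∈ 𝓕. Assume the SBCQ holds at z̄: for every sequence {z^k} ⊂ 𝓕 with z^k → z̄ there exist multipliers λ^k ∈ M(z^k) forming a bounded sequence. If dz = (dx, dy) ∈ T(z̄; 𝓕), then dz ∈ T(z̄; Z) and there exists λ̄ ∈ M(z̄) such that dy solves the affine variational inequality AVI(∇_x L(z̄, λ̄) dx, ∇_y L(z̄, λ̄), K(z̄, λ̄; dx)); that is, dy ∈ K(z̄, λ̄; dx) and ⟨∇_x L(z̄, λ̄) dx + ∇_y L(z̄, λ̄) dy, v − dy⟩ ≥ 0 for all v ∈ K(z̄, λ̄; dx). -/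
open Filter Topology BigOperators

noncomputable section

/-- Vectors in `ℝ^n`. -/
abbrev Vec (n : ℕ) := Fin n → ℝ

/-- Euclidean inner product on `ℝ^n`. -/
def dotp {n : ℕ} (a b : Vec n) : ℝ := ∑ i, a i * b i

/-- The tangent cone to `S` at `z`: all `d` such that there exist points `zs k ∈ S`
with `zs k → z` and scalars `ts k ↓ 0` with `(zs k - z) / ts k → d`. -/
def tangentCone {E : Type*} [NormedAddCommGroup E] [NormedSpace ℝ E]
    (S : Set E) (z : E) : Set E :=
  {d | ∃ (zs : ℕ → E) (ts : ℕ → ℝ),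
    (∀ k, zs k ∈ S) ∧ Tendsto zs atTop (𝓝 z) ∧
    (∀ k, 0 < ts k) ∧ Tendsto ts atTop (𝓝 0) ∧
    Tendsto (fun k => (ts k)⁻¹ • (zs k - z)) atTop (𝓝 d)}

variable {n m l : ℕ}

/-- Lower-level feasible set `C(x) = {y : g(x,y) ≤ 0}`. -/
def lowerC (g : Vec n × Vec m → Vec l) (x : Vec n) : Set (Vec m) :=
  {y | ∀ i, g (x, y) i ≤ 0}

/-- Lower-level VI solution set `S(x) = SOL(F(x,·), C(x))`. -/
def lowerS (F : Vec n × Vec m → Vec m) (g : Vec n × Vec m → Vec l)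
    (x : Vec n) : Set (Vec m) :=
  {y | y ∈ lowerC g x ∧ ∀ v ∈ lowerC g x, 0 ≤ dotp (F (x, y)) (v - y)}

/-- The MPEC feasible set `𝓕 = {(x,y) ∈ Z : y ∈ S(x)}`. -/
def feasSet (F : Vec n × Vec m → Vec m) (g : Vec n × Vec m → Vec l)
    (Z : Set (Vec n × Vec m)) : Set (Vec n × Vec m) :=
  {z | z ∈ Z ∧ z.2 ∈ lowerS F g z.1}

/-- `j`-th component of the gradient `∇_y g_i(z)`. -/
def gradYg (g : Vec n × Vec m → Vec l) (i : Fin l) (z : Vec n × Vec m) : Vec m :=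
  fun j => fderiv ℝ (fun p => g p i) z (0, Pi.single j 1)

/-- `⟨∇_x g_i(z̄), dx⟩`, expressed via the Fréchet derivative in the `x`-slot. -/
def dgX (g : Vec n × Vec m → Vec l) (i : Fin l) (z : Vec n × Vec m) (dx : Vec n) : ℝ :=
  fderiv ℝ (fun p => g p i) z (dx, 0)

/-- `⟨∇_y g_i(z̄), dy⟩`, expressed via the Fréchet derivative in the `y`-slot. -/
def dgY (g : Vec n × Vec m → Vec l) (i : Fin l) (z : Vec n × Vec m) (dy : Vec m) : ℝ :=
  fderiv ℝ (fun p => g p i) z (0, dy)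

/-- Multiplier set `M(z)` of the lower-level VI. -/
def multSet (F : Vec n × Vec m → Vec m) (g : Vec n × Vec m → Vec l)
    (z : Vec n × Vec m) : Set (Vec l) :=
  {lam | (∀ i, 0 ≤ lam i) ∧
    (∀ j, F z j + ∑ i, lam i * gradYg g i z j = 0) ∧
    (∑ i, lam i * g z i = 0)}

/-- VI Lagrangian `L(z, λ) = F(z) + Σ_i λ_i ∇_y g_i(z)`. -/
def viLag (F : Vec n × Vec m → Vec m) (g : Vec n × Vec m → Vec l)
    (z : Vec n × Vec m) (lam : Vec l) : Vec m :=
  fun j => F z j + ∑ i, lam i * gradYg g i z j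

/-- Lifted critical cone `K(z̄, λ)`. -/
def liftedCone (g : Vec n × Vec m → Vec l) (zbar : Vec n × Vec m) (lam : Vec l) :
    Set (Vec n × Vec m) :=
  {d | ∀ i, g zbar i = 0 →
      (lam i = 0 → dgX g i zbar d.1 + dgY g i zbar d.2 ≤ 0) ∧
      (0 < lam i → dgX g i zbar d.1 + dgY g i zbar d.2 = 0)}

/-- Directional critical set `K(z̄, λ; dx)`. -/
def dirCrit (g : Vec n × Vec m → Vec l) (zbar : Vec n × Vec m) (lam : Vec l)
    (dx : Vec n) : Set (Vec m) :=
  {dy | (dx, dy) ∈ liftedCone g zbar lam}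

/-- `∇_x L(z̄, λ) dx`, the partial Jacobian of the VI Lagrangian in `x` applied to `dx`. -/
def jacLx (F : Vec n × Vec m → Vec m) (g : Vec n × Vec m → Vec l)
    (zbar : Vec n × Vec m) (lam : Vec l) (dx : Vec n) : Vec m :=
  fun j => fderiv ℝ (fun z => viLag F g z lam j) zbar (dx, 0)

/-- `∇_y L(z̄, λ) dy`, the partial Jacobian of the VI Lagrangian in `y` applied to `dy`. -/
def jacLy (F : Vec n × Vec m → Vec m) (g : Vec n × Vec m → Vec l)
    (zbar : Vec n × Vec m) (lam : Vec l) (dy : Vec m) : Vec m :=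
  fun j => fderiv ℝ (fun z => viLag F g z lam j) zbar (0, dy)

/-- `dy` solves `AVI(∇_x L(z̄,λ) dx, ∇_y L(z̄,λ), K(z̄,λ;dx))`. -/
def solvesAVI (F : Vec n × Vec m → Vec m) (g : Vec n × Vec m → Vec l)
    (zbar : Vec n × Vec m) (lam : Vec l) (dx : Vec n) (dy : Vec m) : Prop :=
  dy ∈ dirCrit g zbar lam dx ∧
  ∀ v ∈ dirCrit g zbar lam dx,
    0 ≤ dotp (jacLx F g zbar lam dx + jacLy F g zbar lam dy) (v - dy)

/-- SBCQ at `zbar`: every feasible sequence converging to `zbar` admits a bounded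
sequence of multipliers. -/
def SBCQ (F : Vec n × Vec m → Vec m) (g : Vec n × Vec m → Vec l)
    (Z : Set (Vec n × Vec m)) (zbar : Vec n × Vec m) : Prop :=
  ∀ zs : ℕ → Vec n × Vec m, (∀ k, zs k ∈ feasSet F g Z) → Tendsto zs atTop (𝓝 zbar) →
    ∃ lams : ℕ → Vec l, (∀ k, lams k ∈ multSet F g (zs k)) ∧ ∃ C : ℝ, ∀ k, ‖lams k‖ ≤ C

/-! Along a feasible sequence `z^k → z̄` with `(z^k - z̄)/t_k → dz`, SBCQ provides bounded
multipliers `λ^k ∈ M(z^k)`; a subsequence converges to some `λ̄`, which lies in `M(z̄)` because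
the graph of `M` is closed. Complementarity `λ^k_i g_i(z^k) = 0` forces `⟨∇g_i(z̄), dz⟩ = 0`
whenever `λ^k_i > 0` infinitely often, and this puts `dy` in `K(z̄, λ̄; dx)`. Subtracting the
stationarity conditions at `z^k` and at `z̄` and dividing by `t_k`, the Lagrangian part tends
to `∇_x L dx + ∇_y L dy`, while the multiplier part `Σ_i (λ^k_i - λ̄_i)/t_k ∇_y g_i(z̄)`,
tested against `v - dy` for `v ∈ K(z̄, λ̄; dx)`, is eventually nonpositive; in the limit this
is the AVI inequality. -/

section DifferenceQuotient

open Asymptotics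

variable {E G : Type*} [NormedAddCommGroup E] [NormedSpace ℝ E] [NormedAddCommGroup G]
  [NormedSpace ℝ G]

theorem HasFDerivAt.tendsto_inv_smul_sub {f : E → G} {f' : E →L[ℝ] G} {x d : E}
    (hf : HasFDerivAt f f' x) {α : Type*} {l : Filter α} {zs : α → E} {ts : α → ℝ}
    (hz : Tendsto zs l (𝓝 x)) (hd : Tendsto (fun k => (ts k)⁻¹ • (zs k - x)) l (𝓝 d)) :
    Tendsto (fun k => (ts k)⁻¹ • (f (zs k) - f x)) l (𝓝 (f' d)) := by
  have hrem : (fun k => (ts k)⁻¹ • (f (zs k) - f x - f' (zs k - x))) =o[l]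
      (fun k => (ts k)⁻¹ • (zs k - x)) :=
    (isBigO_refl _ l).smul_isLittleO (hf.isLittleO.comp_tendsto hz)
  have hrem0 := (isLittleO_one_iff ℝ).1 (hrem.trans_isBigO (hd.isBigO_one ℝ))
  simpa [smul_sub] using hrem0.add ((f'.continuous.tendsto d).comp hd)

theorem tendsto_inv_smul_sub_pi {ι : Type*} [Fintype ι] {f : E → ι → ℝ} {x d : E}
    (hf : ∀ j, DifferentiableAt ℝ (fun z => f z j) x) {zs : ℕ → E} {ts : ℕ → ℝ}
    (hz : Tendsto zs atTop (𝓝 x)) (hd : Tendsto (fun k => (ts k)⁻¹ • (zs k - x)) atTop (𝓝 d)) :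
    Tendsto (fun k => (ts k)⁻¹ • (f (zs k) - f x)) atTop
      (𝓝 fun j => fderiv ℝ (fun z => f z j) x d) :=
  tendsto_pi_nhds.2 fun j => by simpa using (hf j).hasFDerivAt.tendsto_inv_smul_sub hz hd

end DifferenceQuotient

section Complementarity

variable {μ s t : ℕ → ℝ} {μbar c b : ℝ}

theorem eventually_eq_zero_of_tendsto_neg (hμs : ∀ k, μ k * s k = 0)
    (hs : Tendsto s atTop (𝓝 c)) (hc : c < 0) : ∀ᶠ k in atTop, μ k = 0 :=
  (hs.eventually (eventually_lt_nhds hc)).mono fun k hk =>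
    (mul_eq_zero.1 (hμs k)).resolve_right hk.ne

theorem nonpos_of_tendsto_inv_mul_sub (ht : ∀ k, 0 < t k) (hs0 : ∀ k, s k ≤ 0) (hc : c = 0)
    (hb : Tendsto (fun k => (t k)⁻¹ * (s k - c)) atTop (𝓝 b)) : b ≤ 0 :=
  le_of_tendsto' hb fun k => by
    rw [hc, sub_zero]
    exact mul_nonpos_of_nonneg_of_nonpos (inv_pos.2 (ht k)).le (hs0 k)

theorem eventually_mul_eq_zero_of_tendsto_inv_mul_sub (hμ : ∀ k, 0 ≤ μ k)
    (hμs : ∀ k, μ k * s k = 0) (hs : Tendsto s atTop (𝓝 c))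
    (hb : Tendsto (fun k => (t k)⁻¹ * (s k - c)) atTop (𝓝 b)) :
    ∀ᶠ k in atTop, μ k * b = 0 := by
  by_cases hfreq : ∃ᶠ k in atTop, 0 < μ k
  · have hs_zero : ∃ᶠ k in atTop, s k = 0 :=
      hfreq.mono fun k hk => (mul_eq_zero.1 (hμs k)).resolve_left hk.ne'
    have hc : c = 0 := tendsto_nhds_unique_of_frequently_eq hs tendsto_const_nhds hs_zero
    have hb0 : b = 0 := tendsto_nhds_unique_of_frequently_eq hb tendsto_const_nhds
      (hs_zero.mono fun k hk => by simp [hk, hc])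
    simp [hb0]
  · filter_upwards [not_frequently.1 hfreq] with k hk
    simp [le_antisymm (not_lt.1 hk) (hμ k)]

theorem mul_eq_zero_of_tendsto_inv_mul_sub (hμ : ∀ k, 0 ≤ μ k) (hμs : ∀ k, μ k * s k = 0)
    (hs : Tendsto s atTop (𝓝 c)) (hb : Tendsto (fun k => (t k)⁻¹ * (s k - c)) atTop (𝓝 b))
    (hμlim : Tendsto μ atTop (𝓝 μbar)) : μbar * b = 0 :=
  tendsto_nhds_unique_of_eventuallyEq (hμlim.mul_const b) tendsto_const_nhds
    (eventually_mul_eq_zero_of_tendsto_inv_mul_sub hμ hμs hs hb)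

theorem eventually_sub_mul_sub_nonpos {a : ℝ} (hμ : ∀ k, 0 ≤ μ k) (hμs : ∀ k, μ k * s k = 0)
    (hs0 : ∀ k, s k ≤ 0) (hs : Tendsto s atTop (𝓝 c))
    (hb : Tendsto (fun k => (t k)⁻¹ * (s k - c)) atTop (𝓝 b))
    (hμlim : Tendsto μ atTop (𝓝 μbar)) (ha : c = 0 → a ≤ 0 ∧ μbar * a = 0) :
    ∀ᶠ k in atTop, (μ k - μbar) * (a - b) ≤ 0 := by
  rcases (le_of_tendsto' hs hs0).lt_or_eq with hc | hc
  · have hμ0 := eventually_eq_zero_of_tendsto_neg hμs hs hc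
    have hμbar : μbar = 0 := tendsto_nhds_unique_of_eventuallyEq hμlim tendsto_const_nhds hμ0
    filter_upwards [hμ0] with k hk
    simp [hk, hμbar]
  · obtain ⟨ha, hμa⟩ := ha hc
    have hμb := mul_eq_zero_of_tendsto_inv_mul_sub hμ hμs hs hb hμlim
    filter_upwards [eventually_mul_eq_zero_of_tendsto_inv_mul_sub hμ hμs hs hb] with k hk
    calc (μ k - μbar) * (a - b) = μ k * a := by linear_combination -hμa - hk + hμb
      _ ≤ 0 := mul_nonpos_of_nonneg_of_nonpos (hμ k) ha

end Complementarity

theorem dotp_eq_dotProduct (a b : Vec n) : dotp a b = a ⬝ᵥ b := rfl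

section MPEC

variable {F : Vec n × Vec m → Vec m} {g : Vec n × Vec m → Vec l}

theorem dgX_add_dgY (i : Fin l) (z : Vec n × Vec m) (dx : Vec n) (dy : Vec m) :
    dgX g i z dx + dgY g i z dy = fderiv ℝ (fun p => g p i) z (dx, dy) := by
  rw [dgX, dgY, ← map_add, Prod.mk_add_mk, add_zero, zero_add]

theorem dgY_eq_dotp (i : Fin l) (z : Vec n × Vec m) (w : Vec m) :
    dgY g i z w = dotp (gradYg g i z) w := by
  have := LinearMap.pi_apply_eq_sum_univ
    ((fderiv ℝ (fun p => g p i) z).comp (ContinuousLinearMap.inr ℝ (Vec n) (Vec m))).toLinearMap w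
  refine this.trans (Finset.sum_congr rfl fun k _ => ?_)
  have hsingle : (Pi.single k 1 : Vec m) = fun j => if k = j then 1 else 0 := by
    ext j
    simp [Pi.single_apply, eq_comm]
  simp [gradYg, hsingle, mul_comm]

theorem jacLx_add_jacLy (z : Vec n × Vec m) (lam : Vec l) (dx : Vec n) (dy : Vec m) :
    jacLx F g z lam dx + jacLy F g z lam dy =
      fun j => fderiv ℝ (fun z => viLag F g z lam j) z (dx, dy) := by
  ext j
  rw [Pi.add_apply, jacLx, jacLy, ← map_add, Prod.mk_add_mk, add_zero, zero_add]

theorem viLag_sub_viLag (z : Vec n × Vec m) (μ ν : Vec l) :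
    viLag F g z μ - viLag F g z ν = ∑ i, (μ i - ν i) • gradYg g i z := by
  ext j
  simp [viLag, Finset.sum_apply, sub_mul, Finset.sum_sub_distrib]

theorem differentiable_gradYg (hg : ContDiff ℝ 2 g) (i : Fin l) (j : Fin m) :
    Differentiable ℝ fun z => gradYg g i z j :=
  ((ContinuousLinearMap.apply ℝ ℝ ((0 : Vec n), (Pi.single j 1 : Vec m))).contDiff.comp
    ((contDiff_pi.1 hg i).fderiv_right le_rfl)).differentiable one_ne_zero

theorem differentiable_viLag (hF : ContDiff ℝ 1 F) (hg : ContDiff ℝ 2 g) (lam : Vec l)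
    (j : Fin m) : Differentiable ℝ fun z => viLag F g z lam j :=
  ((contDiff_pi.1 hF j).differentiable one_ne_zero).add
    (Differentiable.fun_sum fun i _ => (differentiable_gradYg hg i j).const_mul (lam i))

theorem continuous_gradYg (hg : ContDiff ℝ 1 g) (i : Fin l) (j : Fin m) :
    Continuous fun z => gradYg g i z j :=
  (ContinuousLinearMap.apply ℝ ℝ ((0 : Vec n), (Pi.single j 1 : Vec m))).continuous.comp
    ((contDiff_pi.1 hg i).continuous_fderiv one_ne_zero)

theorem isClosed_multSet_graph (hF : Continuous F) (hg : ContDiff ℝ 1 g) :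
    IsClosed {p : (Vec n × Vec m) × Vec l | p.2 ∈ multSet F g p.1} := by
  have hG := continuous_gradYg hg
  have hg := hg.continuous
  have hset : {p : (Vec n × Vec m) × Vec l | p.2 ∈ multSet F g p.1} =
      (⋂ i, {p | 0 ≤ p.2 i}) ∩ (⋂ j, {p | F p.1 j + ∑ i, p.2 i * gradYg g i p.1 j = 0}) ∩
        {p | ∑ i, p.2 i * g p.1 i = 0} := by
    ext p
    simp [multSet, and_assoc]
  rw [hset]
  exact ((isClosed_iInter fun i => isClosed_le continuous_const (by fun_prop)).inter
    (isClosed_iInter fun j => isClosed_eq (by fun_prop) continuous_const)).inter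
    (isClosed_eq (by fun_prop) continuous_const)

theorem viLag_eq_zero_of_mem_multSet {z : Vec n × Vec m} {μ : Vec l}
    (hμ : μ ∈ multSet F g z) : viLag F g z μ = 0 :=
  funext hμ.2.1

theorem smul_viLag_sub_viLag_split (t : ℝ) (z zbar : Vec n × Vec m) (μ ν : Vec l) :
    t • (viLag F g z μ - viLag F g zbar ν) = t • (viLag F g z ν - viLag F g zbar ν) +
      ∑ i, (μ i - ν i) • t • (gradYg g i z - gradYg g i zbar) +
      t • ∑ i, (μ i - ν i) • gradYg g i zbar := by
  have hsplit : viLag F g z μ - viLag F g zbar ν = (viLag F g z ν - viLag F g zbar ν) +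
      ∑ i, (μ i - ν i) • (gradYg g i z - gradYg g i zbar) +
      ∑ i, (μ i - ν i) • gradYg g i zbar := by
    rw [add_assoc, ← Finset.sum_add_distrib]
    simp only [smul_sub, sub_add_cancel]
    rw [← viLag_sub_viLag]
    abel
  rw [hsplit, smul_add, smul_add, Finset.smul_sum]
  simp only [smul_comm t]

theorem mul_eq_zero_of_mem_multSet {z : Vec n × Vec m} {μ : Vec l} (hμ : μ ∈ multSet F g z)
    (hz : ∀ i, g z i ≤ 0) (i : Fin l) : μ i * g z i = 0 :=
  (Finset.sum_eq_zero_iff_of_nonpos fun i _ =>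
    mul_nonpos_of_nonneg_of_nonpos (hμ.1 i) (hz i)).1 hμ.2.2 i (Finset.mem_univ i)

variable {zs : ℕ → Vec n × Vec m} {ts : ℕ → ℝ} {lams : ℕ → Vec l} {zbar dz : Vec n × Vec m}
  {lam : Vec l}

theorem mem_multSet_of_tendsto (hF : Continuous F) (hg : ContDiff ℝ 1 g)
    (hlams : ∀ k, lams k ∈ multSet F g (zs k)) (hzs : Tendsto zs atTop (𝓝 zbar))
    (hlam : Tendsto lams atTop (𝓝 lam)) : lam ∈ multSet F g zbar :=
  (isClosed_multSet_graph hF hg).mem_of_tendsto (hzs.prodMk_nhds hlam)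
    (Eventually.of_forall hlams)

theorem tendsto_inv_mul_sub_of_tendsto (hg : ContDiff ℝ 1 g) (hzs : Tendsto zs atTop (𝓝 zbar))
    (hdz : Tendsto (fun k => (ts k)⁻¹ • (zs k - zbar)) atTop (𝓝 dz)) (i : Fin l) :
    Tendsto (fun k => (ts k)⁻¹ * (g (zs k) i - g zbar i)) atTop
      (𝓝 (dgX g i zbar dz.1 + dgY g i zbar dz.2)) := by
  rw [dgX_add_dgY]
  exact ((contDiff_pi.1 hg i).differentiable one_ne_zero zbar).hasFDerivAt.tendsto_inv_smul_sub
    hzs hdz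

theorem mem_dirCrit_of_tendsto (hg : ContDiff ℝ 1 g) (hgk : ∀ k i, g (zs k) i ≤ 0)
    (hlams : ∀ k, lams k ∈ multSet F g (zs k)) (hzs : Tendsto zs atTop (𝓝 zbar))
    (hts : ∀ k, 0 < ts k) (hdz : Tendsto (fun k => (ts k)⁻¹ • (zs k - zbar)) atTop (𝓝 dz))
    (hlam : Tendsto lams atTop (𝓝 lam)) :
    dz.2 ∈ dirCrit g zbar lam dz.1 := by
  intro i hi
  have hb := tendsto_inv_mul_sub_of_tendsto hg hzs hdz i
  have hlam_mul : lam i * (dgX g i zbar dz.1 + dgY g i zbar dz.2) = 0 :=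
    mul_eq_zero_of_tendsto_inv_mul_sub (fun k => (hlams k).1 i)
      (fun k => mul_eq_zero_of_mem_multSet (hlams k) (hgk k) i)
      (((contDiff_pi.1 hg i).continuous.tendsto zbar).comp hzs) hb (tendsto_pi_nhds.1 hlam i)
  exact ⟨fun _ => nonpos_of_tendsto_inv_mul_sub hts (fun k => hgk k i) hi hb,
    fun hpos => (mul_eq_zero.1 hlam_mul).resolve_left hpos.ne'⟩

theorem eventually_sub_mul_dgY_nonpos (hg : ContDiff ℝ 1 g) (hgk : ∀ k i, g (zs k) i ≤ 0)
    (hlams : ∀ k, lams k ∈ multSet F g (zs k)) (hzs : Tendsto zs atTop (𝓝 zbar))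
    (hdz : Tendsto (fun k => (ts k)⁻¹ • (zs k - zbar)) atTop (𝓝 dz))
    (hlam : Tendsto lams atTop (𝓝 lam)) {v : Vec m} (hv : v ∈ dirCrit g zbar lam dz.1)
    (i : Fin l) :
    ∀ᶠ k in atTop, (lams k i - lam i) * dgY g i zbar (v - dz.2) ≤ 0 := by
  have hlam_i := tendsto_pi_nhds.1 hlam i
  have hdgY : dgY g i zbar (v - dz.2) =
      (dgX g i zbar dz.1 + dgY g i zbar v) - (dgX g i zbar dz.1 + dgY g i zbar dz.2) := by
    have hpair : ((0 : Vec n), v - dz.2) = (0, v) - (0, dz.2) := by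
      rw [Prod.mk_sub_mk, sub_zero]
    simp only [dgY]
    rw [hpair, map_sub]
    ring
  rw [hdgY]
  refine eventually_sub_mul_sub_nonpos (fun k => (hlams k).1 i)
    (fun k => mul_eq_zero_of_mem_multSet (hlams k) (hgk k) i) (fun k => hgk k i)
    (((contDiff_pi.1 hg i).continuous.tendsto zbar).comp hzs)
    (tendsto_inv_mul_sub_of_tendsto hg hzs hdz i) hlam_i fun hi => ?_
  rcases (ge_of_tendsto' hlam_i fun k => (hlams k).1 i).eq_or_lt with hzero | hpos
  · exact ⟨(hv i hi).1 hzero.symm, by rw [← hzero, zero_mul]⟩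
  · have ha := (hv i hi).2 hpos
    exact ⟨ha.le, by rw [ha, mul_zero]⟩

theorem eventually_dotp_multiplier_sum_nonpos (hg : ContDiff ℝ 1 g)
    (hgk : ∀ k i, g (zs k) i ≤ 0) (hlams : ∀ k, lams k ∈ multSet F g (zs k))
    (hzs : Tendsto zs atTop (𝓝 zbar)) (hts : ∀ k, 0 < ts k)
    (hdz : Tendsto (fun k => (ts k)⁻¹ • (zs k - zbar)) atTop (𝓝 dz))
    (hlam : Tendsto lams atTop (𝓝 lam)) {v : Vec m} (hv : v ∈ dirCrit g zbar lam dz.1) :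
    ∀ᶠ k in atTop,
      dotp ((ts k)⁻¹ • ∑ i, (lams k i - lam i) • gradYg g i zbar) (v - dz.2) ≤ 0 := by
  filter_upwards [eventually_all.2 (eventually_sub_mul_dgY_nonpos hg hgk hlams hzs hdz hlam hv)]
    with k hk
  calc dotp ((ts k)⁻¹ • ∑ i, (lams k i - lam i) • gradYg g i zbar) (v - dz.2)
      = (ts k)⁻¹ * ∑ i, (lams k i - lam i) * dgY g i zbar (v - dz.2) := by
        simp only [dgY_eq_dotp, dotp_eq_dotProduct, smul_dotProduct, sum_dotProduct,
          smul_eq_mul]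
    _ ≤ 0 := mul_nonpos_of_nonneg_of_nonpos (inv_pos.2 (hts k)).le
        (Finset.sum_nonpos fun i _ => hk i)

theorem solvesAVI_of_tendsto (hF : ContDiff ℝ 1 F) (hg : ContDiff ℝ 2 g)
    (hgk : ∀ k i, g (zs k) i ≤ 0) (hlams : ∀ k, lams k ∈ multSet F g (zs k))
    (hzs : Tendsto zs atTop (𝓝 zbar)) (hts : ∀ k, 0 < ts k)
    (hdz : Tendsto (fun k => (ts k)⁻¹ • (zs k - zbar)) atTop (𝓝 dz))
    (hlam : Tendsto lams atTop (𝓝 lam)) (hlam_mem : lam ∈ multSet F g zbar) :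
    solvesAVI F g zbar lam dz.1 dz.2 := by
  have hg1 : ContDiff ℝ 1 g := hg.of_le one_le_two
  refine ⟨mem_dirCrit_of_tendsto hg1 hgk hlams hzs hts hdz hlam, fun v hv => ?_⟩
  set P : ℕ → Vec m := fun k => (ts k)⁻¹ • (viLag F g (zs k) lam - viLag F g zbar lam)
  set R : ℕ → Vec m := fun k =>
    ∑ i, (lams k i - lam i) • (ts k)⁻¹ • (gradYg g i (zs k) - gradYg g i zbar)
  set B : ℕ → Vec m := fun k => (ts k)⁻¹ • ∑ i, (lams k i - lam i) • gradYg g i zbar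
  have hsplit : ∀ k, P k + R k + B k = 0 := fun k => by
    simp only [P, R, B]
    rw [← smul_viLag_sub_viLag_split, viLag_eq_zero_of_mem_multSet (hlams k),
      viLag_eq_zero_of_mem_multSet hlam_mem, sub_zero, smul_zero]
  have hP : Tendsto P atTop (𝓝 (jacLx F g zbar lam dz.1 + jacLy F g zbar lam dz.2)) := by
    rw [jacLx_add_jacLy]
    exact tendsto_inv_smul_sub_pi (fun j => differentiable_viLag hF hg lam j zbar) hzs hdz
  have hR : Tendsto R atTop (𝓝 0) := by
    simpa using tendsto_finsetSum Finset.univ fun i _ =>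
      ((tendsto_pi_nhds.1 hlam i).sub_const (lam i)).smul
        (tendsto_inv_smul_sub_pi (fun j => differentiable_gradYg hg i j zbar) hzs hdz)
  have hlim : Tendsto (fun k => dotp (P k + R k) (v - dz.2)) atTop
      (𝓝 (dotp (jacLx F g zbar lam dz.1 + jacLy F g zbar lam dz.2) (v - dz.2))) := by
    have h := ((continuous_id.dotProduct (continuous_const (y := v - dz.2))).tendsto _).comp
      (hP.add hR)
    rwa [add_zero] at h
  refine ge_of_tendsto hlim
    ((eventually_dotp_multiplier_sum_nonpos hg1 hgk hlams hzs hts hdz hlam hv).mono fun k hk => ?_)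
  rw [eq_neg_of_add_eq_zero_left (hsplit k), dotp_eq_dotProduct, neg_dotProduct]
  exact neg_nonneg.2 hk

end MPEC

theorem stmt_2_general {n m l : ℕ}
    (F : Vec n × Vec m → Vec m) (g : Vec n × Vec m → Vec l)
    (Z : Set (Vec n × Vec m))
    (hF : ContDiff ℝ 1 F) (hg : ContDiff ℝ 2 g)
    (zbar : Vec n × Vec m)
    (hSBCQ : SBCQ F g Z zbar)
    (dz : Vec n × Vec m) (hdz : dz ∈ tangentCone (feasSet F g Z) zbar) :
    dz ∈ tangentCone Z zbar ∧
    ∃ lam ∈ multSet F g zbar, solvesAVI F g zbar lam dz.1 dz.2 := by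
  obtain ⟨zs, ts, hzsF, hzs, hts, hts0, hquot⟩ := hdz
  refine ⟨⟨zs, ts, fun k => (hzsF k).1, hzs, hts, hts0, hquot⟩, ?_⟩
  obtain ⟨lams, hlams, C, hC⟩ := hSBCQ zs hzsF hzs
  obtain ⟨lam, -, φ, hφ, hlam⟩ := tendsto_subseq_of_bounded
    (isBounded_iff_forall_norm_le.2 ⟨C, Set.forall_mem_range.2 hC⟩) (Set.mem_range_self)
  have hφ := hφ.tendsto_atTop
  have hlams_φ : ∀ k, lams (φ k) ∈ multSet F g (zs (φ k)) := fun k => hlams (φ k)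
  have hlam_mem : lam ∈ multSet F g zbar :=
    mem_multSet_of_tendsto hF.continuous (hg.of_le one_le_two) hlams_φ (hzs.comp hφ) hlam
  exact ⟨lam, hlam_mem, solvesAVI_of_tendsto hF hg (fun k => (hzsF (φ k)).2.1) hlams_φ
    (hzs.comp hφ) (fun k => hts (φ k)) (hquot.comp hφ) hlam hlam_mem⟩

/-- Lemma 3.2.1: under SBCQ, every tangent direction `dz = (dx, dy) ∈ T(z̄; 𝓕)` lies in
`T(z̄; Z)` and there is a multiplier `λ̄ ∈ M(z̄)` such that `dy` solves the affine
variational inequality `AVI(∇_x L(z̄,λ̄) dx, ∇_y L(z̄,λ̄), K(z̄,λ̄;dx))`. -/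
theorem stmt_2 {n m l : ℕ}
    (F : Vec n × Vec m → Vec m) (g : Vec n × Vec m → Vec l)
    (Z : Set (Vec n × Vec m))
    (hF : ContDiff ℝ 1 F) (hg : ContDiff ℝ 2 g)
    (zbar : Vec n × Vec m) (hzbar : zbar ∈ feasSet F g Z)
    (hSBCQ : SBCQ F g Z zbar)
    (dz : Vec n × Vec m) (hdz : dz ∈ tangentCone (feasSet F g Z) zbar) :
    dz ∈ tangentCone Z zbar ∧
    ∃ lam ∈ multSet F g zbar, solvesAVI F g zbar lam dz.1 dz.2 :=
  stmt_2_general F g Z hF hg zbar hSBCQ dz hdz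
end
end

section
/- (Proposition 3.2.3, part 1.) Assume the MPEC setup with F and g continuously differentiable, let z̄ ∈ 𝓕 with M(z̄) nonempty, let dx ∈ ℝ^n, and let λ ∈ M(z̄). Then the directional critical set K(z̄, λ; dx) is nonempty if and only if λ is an optimal solution of the linear program: maximize Σ_{i=1}^{ℓ} λ'_i ⟨∇_x g_i(z̄), dx⟩ over λ' ∈ M(z̄). -/
open Filter Topology BigOperators

noncomputable section

variable {n m l : ℕ}

/-!
Given `λ ∈ M(z̄)`, the other multipliers are the `λ' ≥ 0` supported on the active set with
`λ'ᵀ ∇_y g(z̄) = λᵀ ∇_y g(z̄)`, so the statement is linear-programming duality between this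
polyhedron and the linear system `K(z̄, λ; dx)`. If `dy ∈ K(z̄, λ; dx)`, pairing `λ' - λ` with
`∇_x g(z̄) dx + ∇_y g(z̄) dy` termwise gives weak duality. Conversely, if the system is
infeasible, Farkas' lemma provides a direction `μ` such that `λ + tμ ∈ M(z̄)` for small `t > 0`
with a strictly larger objective. Farkas' lemma itself is hyperplane separation from a finitely
generated cone, which is closed by the conic Carathéodory theorem.
-/

open Matrix

section ConicCaratheodory

variable {𝕜 α E : Type*} [Field 𝕜] [LinearOrder 𝕜] [IsStrictOrderedRing 𝕜] [Fintype α]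
  [AddCommGroup E] [Module 𝕜 E]

theorem exists_nonneg_sub_smul_apply_eq_zero {x w : α → 𝕜} (hx : 0 ≤ x) (hw : ∃ i, 0 < w i) :
    ∃ t : 𝕜, ∃ i, 0 < w i ∧ 0 ≤ x - t • w ∧ (x - t • w) i = 0 := by
  classical
  obtain ⟨i₀, hi₀, hmin⟩ := (Finset.univ.filter (0 < w ·)).exists_min_image (fun i => x i / w i)
    (by simpa [Finset.filter_nonempty_iff] using hw)
  have hwi₀ : 0 < w i₀ := (Finset.mem_filter.mp hi₀).2
  refine ⟨x i₀ / w i₀, i₀, hwi₀, fun i => ?_, by simp [hwi₀.ne']⟩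
  have ht : 0 ≤ x i₀ / w i₀ := div_nonneg (hx i₀) hwi₀.le
  simp only [Pi.zero_apply, Pi.sub_apply, Pi.smul_apply, smul_eq_mul, sub_nonneg]
  rcases lt_or_ge 0 (w i) with hwi | hwi
  · exact (le_div_iff₀ hwi).mp (hmin i (by simpa using hwi))
  · exact (mul_nonpos_of_nonneg_of_nonpos ht hwi).trans (hx i)

/-- `Submodule.pi {i | x' i = 0} ⊥` consists of the vectors supported in the support of `x'`. -/
theorem LinearMap.exists_nonneg_map_eq_disjoint_ker (f : (α → 𝕜) →ₗ[𝕜] E) {x : α → 𝕜}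
    (hx : 0 ≤ x) : ∃ x', 0 ≤ x' ∧ f x' = f x ∧
      Disjoint (LinearMap.ker f) (Submodule.pi {i | x' i = 0} fun _ => ⊥) := by
  classical
  induction hk : (Finset.univ.filter (x · ≠ 0)).card using Nat.strong_induction_on
    generalizing x with
  | _ k ih =>
  by_cases hd : Disjoint (LinearMap.ker f) (Submodule.pi {i | x i = 0} fun _ => ⊥)
  · exact ⟨x, hx, rfl, hd⟩
  rw [Submodule.disjoint_def] at hd
  push Not at hd
  obtain ⟨w, hwker, hwpi, hw0⟩ := hd
  have hwsupp : ∀ i, x i = 0 → w i = 0 :=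
    fun i hi => (Submodule.mem_bot 𝕜).mp (Submodule.mem_pi.mp hwpi i hi)
  clear hwpi
  wlog hwpos : ∃ i, 0 < w i generalizing w
  · refine this (-w) (by simpa using hwker) (neg_ne_zero.mpr hw0) (by simpa using hwsupp) ?_
    obtain ⟨i, hi⟩ := Function.ne_iff.mp hw0
    push Not at hwpos
    exact ⟨i, by simpa using (hwpos i).lt_of_ne hi⟩
  obtain ⟨t, i, hwi, hnn, hzero⟩ := exists_nonneg_sub_smul_apply_eq_zero hx hwpos
  have hlt : (Finset.univ.filter ((x - t • w) · ≠ 0)) ⊂ Finset.univ.filter (x · ≠ 0) := by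
    refine Finset.ssubset_iff_of_subset (fun j => ?_) |>.mpr ⟨i, ?_, ?_⟩
    · simp only [Finset.mem_filter, Finset.mem_univ, true_and]
      contrapose!
      intro hxj
      simp [hxj, hwsupp j hxj]
    · simpa using fun hxi => hwi.ne' (hwsupp i hxi)
    · simpa using hzero
  obtain ⟨x', hx', hfx', hd'⟩ := ih _ (hk ▸ Finset.card_lt_card hlt) hnn rfl
  refine ⟨x', hx', ?_, hd'⟩
  rw [hfx', map_sub, map_smul, LinearMap.mem_ker.mp hwker, smul_zero, sub_zero]

end ConicCaratheodory

section PolyhedralCone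

variable {α E : Type*} [Fintype α] [AddCommGroup E] [Module ℝ E] [TopologicalSpace E]
  [IsTopologicalAddGroup E] [ContinuousSMul ℝ E] [T2Space E]

theorem LinearMap.isClosed_image_Ici_zero (f : (α → ℝ) →ₗ[ℝ] E) : IsClosed (f '' Set.Ici 0) := by
  classical
  set V : Set α → Submodule ℝ (α → ℝ) := fun s => Submodule.pi s fun _ => ⊥
  have hunion : f '' Set.Ici 0 =
      ⋃ s ∈ {s | Disjoint (LinearMap.ker f) (V s)},
        f.domRestrict (V s) '' {u | 0 ≤ (u : α → ℝ)} := by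
    apply subset_antisymm
    · rintro _ ⟨x, hx, rfl⟩
      obtain ⟨x', hx', hfx', hd⟩ := f.exists_nonneg_map_eq_disjoint_ker hx
      refine Set.mem_biUnion (x := {i | x' i = 0}) hd ⟨⟨x', ?_⟩, hx', hfx'⟩
      exact Submodule.mem_pi.mpr fun i hi => (Submodule.mem_bot ℝ).mpr hi
    · exact Set.iUnion₂_subset fun s _ => by
        rintro _ ⟨u, hu, rfl⟩
        exact ⟨u, hu, rfl⟩
  rw [hunion]
  refine (Set.toFinite _).isClosed_biUnion fun s hs => ?_
  have hker : LinearMap.ker (f.domRestrict (V s)) = ⊥ := by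
    rw [LinearMap.ker_eq_bot']
    intro u hu
    exact Subtype.ext (Submodule.disjoint_def.mp hs u hu u.2)
  exact (LinearMap.isClosedEmbedding_of_injective hker).isClosedMap _
    (isClosed_le continuous_const continuous_subtype_val)

end PolyhedralCone

theorem LinearMap.apply_eq_dotProduct_single {R κ : Type*} [CommSemiring R] [Fintype κ]
    [DecidableEq κ] (φ : (κ → R) →ₗ[R] R) (u : κ → R) :
    φ u = u ⬝ᵥ fun k => φ (Pi.single k 1) := by
  conv_lhs => rw [← (LinearEquiv.piRing R R κ R).symm_apply_apply φ]
  simp only [LinearEquiv.piRing_symm_apply, LinearEquiv.piRing_apply, smul_eq_mul, dotProduct]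

namespace Matrix

variable {α κ : Type*} [Fintype α] [Fintype κ]

theorem exists_nonneg_mulVec_of_forall_vecMul_ne (A : Matrix α κ ℝ) (b : κ → ℝ)
    (h : ∀ x, 0 ≤ x → x ᵥ* A ≠ b) : ∃ y, 0 ≤ A *ᵥ y ∧ b ⬝ᵥ y < 0 := by
  classical
  let C : ProperCone ℝ (κ → ℝ) :=
    { toSubmodule := (PointedCone.positive ℝ (α → ℝ)).map A.vecMulLinear
      isClosed' := by
        simpa [PointedCone.coe_map] using A.vecMulLinear.isClosed_image_Ici_zero }
  have hb : b ∉ C := by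
    rintro ⟨x, hx, rfl⟩
    exact h x hx rfl
  obtain ⟨φ, hφC, hφb⟩ := C.hyperplane_separation_point hb
  set y : κ → ℝ := fun k => φ (Pi.single k 1)
  have hφ : ∀ u, φ u = u ⬝ᵥ y := (φ : (κ → ℝ) →ₗ[ℝ] ℝ).apply_eq_dotProduct_single
  refine ⟨y, fun i => ?_, by rwa [← hφ]⟩
  have := hφC (Pi.single i 1 ᵥ* A) ⟨Pi.single i 1, by simp [Pi.single_nonneg], rfl⟩
  simpa [hφ, single_one_vecMul, mulVec, dotProduct] using this

theorem exists_mulVec_le_of_forall_nonneg (C : Matrix α κ ℝ) (d : α → ℝ)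
    (h : ∀ ν, 0 ≤ ν → ν ᵥ* C = 0 → 0 ≤ ν ⬝ᵥ d) : ∃ y, C *ᵥ y ≤ d := by
  -- `(0, -1)` is not a nonnegative combination of the rows `(Cᵢ, dᵢ)`; the last coordinate of a
  -- separating vector is positive, and rescaling by it turns the rest into a solution.
  obtain ⟨y, hy, hyb⟩ := exists_nonneg_mulVec_of_forall_vecMul_ne
    (fromCols C (replicateCol Unit d)) (Sum.elim 0 (-1)) fun ν hν hνb => by
      have hC : ν ᵥ* C = 0 := by simpa using congrArg (· ∘ Sum.inl) hνb
      have hd : ν ⬝ᵥ d = -1 := congrFun hνb (Sum.inr ())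
      linarith [h ν hν hC]
  set t := y (Sum.inr ())
  have ht : 0 < t := by simpa [t, dotProduct, Fintype.sum_sum_type] using hyb
  refine ⟨-t⁻¹ • (y ∘ Sum.inl), fun i => ?_⟩
  have hi : 0 ≤ (C *ᵥ (y ∘ Sum.inl)) i + d i * t := by simpa [mulVec, dotProduct, t] using hy i
  rw [mulVec_smul, Pi.smul_apply, smul_eq_mul, neg_mul, neg_le, le_inv_mul_iff₀ ht]
  linarith

end Matrix

theorem exists_pos_nonneg_add_smul {ι : Type*} [Finite ι] {x w : ι → ℝ} (hx : 0 ≤ x)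
    (hw : ∀ i, w i < 0 → 0 < x i) : ∃ t : ℝ, 0 < t ∧ 0 ≤ x + t • w := by
  have hev : ∀ᶠ t in 𝓝[>] (0 : ℝ), ∀ i, 0 ≤ x i + t * w i := by
    refine eventually_all.mpr fun i => ?_
    rcases lt_or_ge (w i) 0 with hwi | hwi
    · have hlim : Tendsto (fun t => x i + t * w i) (𝓝[>] 0) (𝓝 (x i)) :=
        ((by fun_prop : Continuous fun t : ℝ => x i + t * w i).tendsto' 0 _ (by simp)).mono_left
          nhdsWithin_le_nhds
      exact (hlim.eventually (eventually_gt_nhds (hw i hwi))).mono fun t ht => ht.le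
    · filter_upwards [self_mem_nhdsWithin] with t ht
      exact add_nonneg (hx i) (mul_nonneg (le_of_lt ht) hwi)
  obtain ⟨t, ht, ht0⟩ := (hev.and self_mem_nhdsWithin).exists
  exact ⟨t, ht0, fun i => by simpa using ht i⟩

section LinearProgram

variable {ι κ : Type*} [Fintype ι] [Fintype κ] {A : Matrix ι κ ℝ} {b : ι → ℝ} {act : Set ι}
  {lam : ι → ℝ}

theorem dotProduct_le_of_critical (hlam : 0 ≤ lam) (hsupp : ∀ i ∉ act, lam i = 0)
    {y : κ → ℝ}
    (hy : ∀ i ∈ act, (lam i = 0 → b i + (A *ᵥ y) i ≤ 0) ∧ (0 < lam i → b i + (A *ᵥ y) i = 0))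
    {lam' : ι → ℝ} (hlam' : 0 ≤ lam') (hsupp' : ∀ i ∉ act, lam' i = 0)
    (hA : lam' ᵥ* A = lam ᵥ* A) : lam' ⬝ᵥ b ≤ lam ⬝ᵥ b := by
  have hterm : ∀ i, (lam' - lam) i * (b + A *ᵥ y) i ≤ 0 := by
    intro i
    by_cases hi : i ∈ act
    · rcases (hlam i).eq_or_lt with h0 | hpos
      · simpa [← h0] using mul_nonpos_of_nonneg_of_nonpos (hlam' i) ((hy i hi).1 h0.symm)
      · simp [(hy i hi).2 hpos]
    · simp [hsupp i hi, hsupp' i hi]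
  have hAy : (lam' - lam) ⬝ᵥ (A *ᵥ y) = 0 := by
    rw [dotProduct_mulVec, sub_vecMul, hA, sub_self, zero_dotProduct]
  have : (lam' - lam) ⬝ᵥ (b + A *ᵥ y) ≤ 0 := Finset.sum_nonpos fun i _ => hterm i
  rw [dotProduct_add, hAy, add_zero, sub_dotProduct] at this
  linarith

theorem exists_critical_of_forall_dotProduct_le (hlam : 0 ≤ lam) (hsupp : ∀ i ∉ act, lam i = 0)
    (hopt : ∀ lam' : ι → ℝ, 0 ≤ lam' → (∀ i ∉ act, lam' i = 0) → lam' ᵥ* A = lam ᵥ* A →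
      lam' ⬝ᵥ b ≤ lam ⬝ᵥ b) :
    ∃ y : κ → ℝ, ∀ i ∈ act,
      (lam i = 0 → b i + (A *ᵥ y) i ≤ 0) ∧ (0 < lam i → b i + (A *ᵥ y) i = 0) := by
  classical
  -- The weights switch off the rows of `b + A y ≤ 0` outside `act` and those of `b + A y ≥ 0`
  -- where `lam i = 0`; a Farkas certificate `ν` then gives a direction `μ` along which `lam`
  -- stays feasible and the objective strictly increases.
  set w₁ : ι → ℝ := act.indicator 1
  set w₂ : ι → ℝ := {i | 0 < lam i}.indicator 1
  obtain ⟨y, hy⟩ := Matrix.exists_mulVec_le_of_forall_nonneg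
    (Matrix.fromRows (Matrix.diagonal w₁ * A) (-(Matrix.diagonal w₂ * A)))
    (Sum.elim (-(w₁ * b)) (w₂ * b)) fun ν hν hνC => by
      set μ := (ν ∘ Sum.inl) * w₁ - (ν ∘ Sum.inr) * w₂
      have hdiag : ∀ v w : ι → ℝ, v ᵥ* Matrix.diagonal w = v * w :=
        fun v w => funext (Matrix.vecMul_diagonal v w)
      have hμA : μ ᵥ* A = 0 := by
        rw [Matrix.vecMul_fromRows, Matrix.vecMul_neg, ← Matrix.vecMul_vecMul,
          ← Matrix.vecMul_vecMul, hdiag, hdiag, ← sub_eq_add_neg, ← Matrix.sub_vecMul] at hνC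
        exact hνC
      have hνd : ν ⬝ᵥ Sum.elim (-(w₁ * b)) (w₂ * b) = -(μ ⬝ᵥ b) := by
        rw [← Sum.elim_comp_inl_inr ν, sumElim_dotProduct_sumElim]
        simp only [μ, dotProduct, Pi.mul_apply, Pi.sub_apply, Pi.neg_apply,
          Function.comp_apply, ← Finset.sum_add_distrib, ← Finset.sum_neg_distrib]
        exact Finset.sum_congr rfl fun i _ => by ring
      have hμsupp : ∀ i ∉ act, μ i = 0 := fun i hi => by
        simp [μ, w₁, w₂, hi, hsupp i hi]
      have hμneg : ∀ i, μ i < 0 → 0 < lam i := fun i hi => by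
        by_contra hlami
        have hw₁ : 0 ≤ w₁ i := Set.indicator_nonneg (fun _ _ => zero_le_one) i
        have hw₂ : w₂ i = 0 := Set.indicator_of_notMem (s := {i | 0 < lam i}) hlami 1
        simp only [μ, Pi.sub_apply, Pi.mul_apply, hw₂, mul_zero, sub_zero] at hi
        exact hi.not_ge (mul_nonneg (hν _) hw₁)
      by_contra! hneg
      obtain ⟨t, ht, hnn⟩ := exists_pos_nonneg_add_smul hlam hμneg
      have hle := hopt (lam + t • μ) hnn (fun i hi => by simp [hsupp i hi, hμsupp i hi])
        (by rw [Matrix.add_vecMul, Matrix.smul_vecMul, hμA, smul_zero, add_zero])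
      rw [add_dotProduct, smul_dotProduct, smul_eq_mul] at hle
      nlinarith
  have hrow : ∀ i, w₁ i * (A *ᵥ y) i ≤ -(w₁ i * b i) ∧ -(w₂ i * (A *ᵥ y) i) ≤ w₂ i * b i :=
    fun i => ⟨by simpa [← Matrix.mulVec_mulVec, Matrix.mulVec_diagonal] using hy (Sum.inl i),
      by simpa [← Matrix.mulVec_mulVec, Matrix.mulVec_diagonal, Matrix.neg_mulVec] using
        hy (Sum.inr i)⟩
  refine ⟨y, fun i hi => ⟨fun _ => ?_, fun hpos => ?_⟩⟩
  · have := (hrow i).1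
    simp only [w₁, Set.indicator_of_mem hi, Pi.one_apply, one_mul] at this
    linarith
  · have h₁ := (hrow i).1
    have h₂ := (hrow i).2
    simp only [w₁, w₂, Set.indicator_of_mem hi,
      Set.indicator_of_mem (show i ∈ {i | 0 < lam i} from hpos), Pi.one_apply, one_mul] at h₁ h₂
    linarith

theorem exists_critical_iff_forall_dotProduct_le (hlam : 0 ≤ lam)
    (hsupp : ∀ i ∉ act, lam i = 0) :
    (∃ y : κ → ℝ, ∀ i ∈ act,
      (lam i = 0 → b i + (A *ᵥ y) i ≤ 0) ∧ (0 < lam i → b i + (A *ᵥ y) i = 0)) ↔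
    ∀ lam' : ι → ℝ, 0 ≤ lam' → (∀ i ∉ act, lam' i = 0) → lam' ᵥ* A = lam ᵥ* A →
      lam' ⬝ᵥ b ≤ lam ⬝ᵥ b :=
  ⟨fun ⟨_, hy⟩ _ hlam' hsupp' hA => dotProduct_le_of_critical hlam hsupp hy hlam' hsupp' hA,
    exists_critical_of_forall_dotProduct_le hlam hsupp⟩

end LinearProgram

theorem dotProduct_eq_zero_iff_of_nonneg_of_nonpos {R ι : Type*} [CommRing R] [LinearOrder R]
    [IsStrictOrderedRing R] [Fintype ι] {x s : ι → R} (hx : 0 ≤ x) (hs : s ≤ 0) :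
    x ⬝ᵥ s = 0 ↔ ∀ i, s i ≠ 0 → x i = 0 := by
  rw [dotProduct, Finset.sum_eq_zero_iff_of_nonpos
    fun i _ => mul_nonpos_of_nonneg_of_nonpos (hx i) (hs i)]
  simp only [Finset.mem_univ, true_imp_iff, mul_eq_zero]
  exact forall_congr' fun i => by tauto

def jacYg (g : Vec n × Vec m → Vec l) (z : Vec n × Vec m) : Matrix (Fin l) (Fin m) ℝ :=
  Matrix.of fun i => gradYg g i z

theorem dgY_eq_mulVec (g : Vec n × Vec m → Vec l) (i : Fin l) (z : Vec n × Vec m)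
    (dy : Vec m) : dgY g i z dy = (jacYg g z *ᵥ dy) i := by
  rw [mulVec, dotProduct_comm]
  exact LinearMap.apply_eq_dotProduct_single
    ((fderiv ℝ (fun p => g p i) z).comp (ContinuousLinearMap.inr ℝ (Vec n) (Vec m)) :
      Vec m →ₗ[ℝ] ℝ) dy

theorem mem_multSet_iff_of_mem {F : Vec n × Vec m → Vec m} {g : Vec n × Vec m → Vec l}
    {zbar : Vec n × Vec m} (hg : ∀ i, g zbar i ≤ 0) {lam lam' : Vec l}
    (hlam : lam ∈ multSet F g zbar) :
    lam' ∈ multSet F g zbar ↔ 0 ≤ lam' ∧ (∀ i, g zbar i ≠ 0 → lam' i = 0) ∧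
      lam' ᵥ* jacYg g zbar = lam ᵥ* jacYg g zbar := by
  refine and_congr_right fun h0 => ?_
  rw [← dotProduct_eq_zero_iff_of_nonneg_of_nonpos h0 hg, and_comm, funext_iff]
  refine and_congr_right fun _ => forall_congr' fun j => ?_
  have := hlam.2.1 j
  constructor <;> intro h <;> simp only [vecMul, dotProduct, jacYg, of_apply] at h ⊢ <;> linarith

theorem stmt_4_general {n m l : ℕ}
    (F : Vec n × Vec m → Vec m) (g : Vec n × Vec m → Vec l)
    (Z : Set (Vec n × Vec m))
    (zbar : Vec n × Vec m) (hzbar : zbar ∈ feasSet F g Z)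
    (dx : Vec n) (lam : Vec l) (hlam : lam ∈ multSet F g zbar) :
    (dirCrit g zbar lam dx).Nonempty ↔
      ∀ lam' ∈ multSet F g zbar,
        ∑ i, lam' i * dgX g i zbar dx ≤ ∑ i, lam i * dgX g i zbar dx := by
  have hslack : ∀ i, g zbar i ≤ 0 := hzbar.2.1
  have hM := fun lam' => mem_multSet_iff_of_mem (lam' := lam') hslack hlam
  obtain ⟨hlam0, hsupp, -⟩ := (hM lam).mp hlam
  refine Iff.trans ?_ ((exists_critical_iff_forall_dotProduct_le (A := jacYg g zbar)
    (b := fun i => dgX g i zbar dx) (act := {i | g zbar i = 0}) hlam0 hsupp).trans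
      (forall_congr' fun lam' => ?_))
  · simp only [Set.Nonempty, dirCrit, liftedCone, dgY_eq_mulVec]
    rfl
  · rw [hM, and_imp, and_imp]
    rfl

/-- Proposition 3.2.3, part 1: for `λ ∈ M(z̄)`, the directional critical set
`K(z̄, λ; dx)` is nonempty if and only if `λ` maximizes
`Σ_i λ'_i ⟨∇_x g_i(z̄), dx⟩` over `λ' ∈ M(z̄)`. -/
theorem stmt_4 {n m l : ℕ}
    (F : Vec n × Vec m → Vec m) (g : Vec n × Vec m → Vec l)
    (Z : Set (Vec n × Vec m))
    (hF : ContDiff ℝ 1 F) (hg : ContDiff ℝ 1 g)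
    (zbar : Vec n × Vec m) (hzbar : zbar ∈ feasSet F g Z)
    (hMne : (multSet F g zbar).Nonempty)
    (dx : Vec n) (lam : Vec l) (hlam : lam ∈ multSet F g zbar) :
    (dirCrit g zbar lam dx).Nonempty ↔
      ∀ lam' ∈ multSet F g zbar,
        ∑ i, lam' i * dgX g i zbar dx ≤ ∑ i, lam i * dgX g i zbar dx :=
  stmt_4_general F g Z zbar hzbar dx lam hlam
end
end

section
/- Let 𝓕 = {(x, y, λ) ∈ ℝ³ : y − λ = 0, yλ = 0, y ≥ 0, λ ≥ 0}. Then: (1) 𝓕 = ℝ × {0} × {0}; (2) for every x̄ ∈ ℝ, the tangent cone satisfies T((x̄,0,0); 𝓕) = ℝ × {0} × {0}; (3) the NLP linearized cone at (x̄,0,0), namely 𝓛 = {(dx, dy, dλ) ∈ ℝ³ : dy − dλ = 0, dy ≥ 0, dλ ≥ 0} (the gradient of the equality yλ = 0 vanishes at (x̄,0,0)), equals {(dx, t, t) : dx ∈ ℝ, t ≥ 0}; and (4) T((x̄,0,0); 𝓕) is a proper subset of 𝓛, so the basic NLP constraint qualification (equality of tangent and linearized cones) fails at every feasible point. -/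
open Filter Topology

lemma sub_eq_zero_and_mul_eq_zero_iff {R : Type*} [Ring R] [NoZeroDivisors R] {a b : R} :
    a - b = 0 ∧ a * b = 0 ↔ a = 0 ∧ b = 0 := by
  constructor
  · rintro ⟨hsub, hmul⟩
    obtain rfl := sub_eq_zero.mp hsub
    have ha : a = 0 := mul_self_eq_zero.mp hmul
    exact ⟨ha, ha⟩
  · rintro ⟨rfl, rfl⟩
    simp

section TangentCone

variable {E : Type*} [NormedAddCommGroup E] [NormedSpace ℝ E]

lemma tangentCone_subset_of_isClosed (K : Submodule ℝ E) (hK : IsClosed (K : Set E)) {z : E}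
    (hz : z ∈ K) : tangentCone (K : Set E) z ⊆ K := by
  rintro d ⟨zs, ts, hzs, -, -, -, hlim⟩
  exact hK.mem_of_tendsto hlim
    (Eventually.of_forall fun k => K.smul_mem _ (K.sub_mem (hzs k) hz))

lemma subset_tangentCone (K : Submodule ℝ E) {z : E} (hz : z ∈ K) :
    (K : Set E) ⊆ tangentCone (K : Set E) z := by
  intro d hd
  set ts : ℕ → ℝ := fun k => 1 / ((k : ℝ) + 1)
  have hts : Tendsto ts atTop (𝓝 0) := tendsto_one_div_add_atTop_nhds_zero_nat
  have hts_pos : ∀ k, 0 < ts k := fun k => by positivity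
  refine ⟨fun k => z + ts k • d, ts, fun k => K.add_mem hz (K.smul_mem _ hd), ?_, hts_pos, hts,
    ?_⟩
  · simpa using tendsto_const_nhds.add (hts.smul_const d)
  · simp only [add_sub_cancel_left, inv_smul_smul₀ (hts_pos _).ne']
    exact tendsto_const_nhds

lemma tangentCone_submodule (K : Submodule ℝ E) (hK : IsClosed (K : Set E)) {z : E}
    (hz : z ∈ K) : tangentCone (K : Set E) z = K :=
  (tangentCone_subset_of_isClosed K hK hz).antisymm (subset_tangentCone K hz)

end TangentCone

lemma setOf_snd_eq_zero_eq_ker :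
    {p : ℝ × ℝ × ℝ | p.2.1 = 0 ∧ p.2.2 = 0} =
      ((ContinuousLinearMap.snd ℝ ℝ (ℝ × ℝ)).ker : Set (ℝ × ℝ × ℝ)) := by
  ext p
  simp [Prod.ext_iff]

lemma tangentCone_eq_of_eq_setOf_snd_eq_zero {Feas : Set (ℝ × ℝ × ℝ)}
    (hFeas : Feas = {p : ℝ × ℝ × ℝ | p.2.1 = 0 ∧ p.2.2 = 0}) (xbar : ℝ) :
    tangentCone Feas (xbar, 0, 0) = {d : ℝ × ℝ × ℝ | d.2.1 = 0 ∧ d.2.2 = 0} := by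
  rw [hFeas, setOf_snd_eq_zero_eq_ker]
  exact tangentCone_submodule _ (ContinuousLinearMap.isClosed_ker _) rfl

lemma sub_eq_zero_and_nonneg_iff_exists {R : Type*} [AddGroup R] [LE R] {a b : R} :
    a - b = 0 ∧ 0 ≤ a ∧ 0 ≤ b ↔ ∃ t : R, 0 ≤ t ∧ a = t ∧ b = t := by
  constructor
  · rintro ⟨hsub, ha, -⟩
    exact ⟨a, ha, rfl, (sub_eq_zero.mp hsub).symm⟩
  · rintro ⟨t, ht, rfl, rfl⟩
    exact ⟨sub_self _, ht, ht⟩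

/-- KKT reformulation of the MPEC with `F(x,y) = y`, `g(x,y) = −y`:
(1) the feasible set is `ℝ × {0} × {0}`; (2) the tangent cone there is
`ℝ × {0} × {0}`; (3) the NLP linearized cone is `{(dx,t,t) : t ≥ 0}`;
(4) the tangent cone is a proper subset of the linearized cone, so the basic NLP
constraint qualification fails at every feasible point. -/
theorem stmt_9
    (Feas : Set (ℝ × ℝ × ℝ))
    (hFeas : Feas = {p : ℝ × ℝ × ℝ |
      p.2.1 - p.2.2 = 0 ∧ p.2.1 * p.2.2 = 0 ∧ 0 ≤ p.2.1 ∧ 0 ≤ p.2.2})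
    (Lin : Set (ℝ × ℝ × ℝ))
    (hLin : Lin = {d : ℝ × ℝ × ℝ | d.2.1 - d.2.2 = 0 ∧ 0 ≤ d.2.1 ∧ 0 ≤ d.2.2}) :
    Feas = {p : ℝ × ℝ × ℝ | p.2.1 = 0 ∧ p.2.2 = 0} ∧
    (∀ xbar : ℝ, tangentCone Feas (xbar, 0, 0) =
      {d : ℝ × ℝ × ℝ | d.2.1 = 0 ∧ d.2.2 = 0}) ∧
    Lin = {d : ℝ × ℝ × ℝ | ∃ t : ℝ, 0 ≤ t ∧ d.2.1 = t ∧ d.2.2 = t} ∧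
    (∀ xbar : ℝ, tangentCone Feas (xbar, 0, 0) ⊂ Lin) := by
  have hFeas' : Feas = {p : ℝ × ℝ × ℝ | p.2.1 = 0 ∧ p.2.2 = 0} := by
    ext p
    rw [hFeas]
    constructor
    · rintro ⟨hsub, hmul, -, -⟩
      exact sub_eq_zero_and_mul_eq_zero_iff.mp ⟨hsub, hmul⟩
    · intro h
      obtain ⟨hsub, hmul⟩ := sub_eq_zero_and_mul_eq_zero_iff.mpr h
      exact ⟨hsub, hmul, h.1.ge, h.2.ge⟩
  have hTan := tangentCone_eq_of_eq_setOf_snd_eq_zero hFeas'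
  have hLin' : Lin = {d : ℝ × ℝ × ℝ | ∃ t : ℝ, 0 ≤ t ∧ d.2.1 = t ∧ d.2.2 = t} := by
    ext d
    simp only [hLin, Set.mem_ofPred_eq, sub_eq_zero_and_nonneg_iff_exists]
  refine ⟨hFeas', hTan, hLin', fun xbar => ?_⟩
  rw [hTan, hLin', Set.ssubset_iff_of_subset]
  · exact ⟨(0, 1, 1), ⟨1, zero_le_one, rfl, rfl⟩, fun h => one_ne_zero h.1⟩
  · rintro d ⟨h1, h2⟩
    exact ⟨0, le_rfl, h1, h2⟩
end
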